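/- Let α > −1/4, β = √(1+4α), and φ₀(R) = β·R^{(β+1)/2}(1−R^{2β})/(1+R^{2β})^{3/2}. Then φ₀ is square integrable on (0,∞), i.e. ∫₀^∞ φ₀(R)² dR < ∞, if and only if β > 2. -/
import Mathlib


open MeasureTheory

noncomputable def betaOf (α : ℝ) : ℝ := Real.sqrt (1 + 4 * α)

/-- `φ₀(R) = β R^((β+1)/2) (1-R^(2β)) / (1+R^(2β))^(3/2)`. -/
noncomputable def phi0 (α : ℝ) (R : ℝ) : ℝ :=
  betaOf α * R ^ ((betaOf α + 1) / 2) * (1 - R ^ (2 * betaOf α)) /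
    (1 + R ^ (2 * betaOf α)) ^ ((3 : ℝ) / 2)

lemma phi0_sq_eq (α : ℝ) {R : ℝ} (hR : 0 < R) :
    (phi0 α R) ^ 2 = (betaOf α) ^ 2 * R ^ (betaOf α + 1) * (1 - R ^ (2 * betaOf α)) ^ 2 /
      (1 + R ^ (2 * betaOf α)) ^ 3 := by
  have hX : (0 : ℝ) < R ^ (2 * betaOf α) := Real.rpow_pos_of_pos hR _
  have hden : (0 : ℝ) < 1 + R ^ (2 * betaOf α) := by linarith
  have e1 : (R ^ ((betaOf α + 1) / 2)) ^ 2 = R ^ (betaOf α + 1) := by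
    rw [← Real.rpow_natCast (R ^ ((betaOf α + 1) / 2)) 2, ← Real.rpow_mul hR.le]
    norm_num
  have e2 : ((1 + R ^ (2 * betaOf α)) ^ ((3 : ℝ) / 2)) ^ 2 = (1 + R ^ (2 * betaOf α)) ^ 3 := by
    rw [← Real.rpow_natCast ((1 + R ^ (2 * betaOf α)) ^ ((3 : ℝ) / 2)) 2,
      ← Real.rpow_mul hden.le,
      show (3 : ℝ) / 2 * ((2 : ℕ) : ℝ) = ((3 : ℕ) : ℝ) by push_cast; ring,
      Real.rpow_natCast]
  unfold phi0
  rw [div_pow, mul_pow, mul_pow, e1, e2]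

lemma phi0_sq_meas (α : ℝ) : Measurable fun R => (phi0 α R) ^ 2 := by
  have hb : (0 : ℝ) ≤ betaOf α := Real.sqrt_nonneg _
  have h1 := (Real.continuous_rpow_const (q := (betaOf α + 1) / 2) (by linarith)).measurable
  have h2 := (Real.continuous_rpow_const (q := 2 * betaOf α) (by linarith)).measurable
  have h3 := (Real.continuous_rpow_const (q := (3 : ℝ) / 2) (by norm_num)).measurable
  exact (((measurable_const.mul h1).mul (measurable_const.sub h2)).div
    (h3.comp (measurable_const.add h2))).pow measurable_const

/-- `φ₀` is square integrable on `(0,∞)` if and only if `β > 2`. -/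
theorem phi0_square_integrable_iff (α : ℝ) (hα : -(1 / 4 : ℝ) < α) :
    IntegrableOn (fun R => (phi0 α R) ^ 2) (Set.Ioi 0) ↔ 2 < betaOf α := by
  set β := betaOf α with hβdef
  have hβ : 0 < β := Real.sqrt_pos.mpr (by linarith)
  have hβ2 : (0 : ℝ) < β ^ 2 := by positivity
  constructor
  · intro h
    set c : ℝ := 2 ^ (2 * β)⁻¹ with hc
    have hc1 : 1 < c :=
      (Real.one_lt_rpow_iff_of_pos two_pos).mpr (Or.inl ⟨one_lt_two, by positivity⟩)
    have hc0 : 0 < c := lt_trans one_pos hc1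
    have key : IntegrableOn (fun R : ℝ => R ^ (1 - β)) (Set.Ioi c) := by
      have hg : IntegrableOn (fun R => 32 / β ^ 2 * (phi0 α R) ^ 2) (Set.Ioi c) :=
        (h.mono_set (Set.Ioi_subset_Ioi hc0.le)).const_mul _
      have hcont : ContinuousOn (fun R : ℝ => R ^ (1 - β)) (Set.Ioi c) :=
        fun x hx => (Real.continuousAt_rpow_const x _
          (Or.inl (ne_of_gt (lt_trans hc0 hx)))).continuousWithinAt
      apply hg.mono' (hcont.aestronglyMeasurable measurableSet_Ioi)
      filter_upwards [ae_restrict_mem measurableSet_Ioi] with R hR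
      have hRc : c < R := hR
      have hR0 : (0 : ℝ) < R := lt_trans hc0 hRc
      have hX : (0 : ℝ) < R ^ (2 * β) := Real.rpow_pos_of_pos hR0 _
      have hX2 : (2 : ℝ) ≤ R ^ (2 * β) := by
        have hle : c ^ (2 * β) ≤ R ^ (2 * β) :=
          Real.rpow_le_rpow hc0.le hRc.le (by positivity)
        calc (2 : ℝ) = c ^ (2 * β) := by
              rw [hc, ← Real.rpow_mul (by norm_num : (0 : ℝ) ≤ 2),
                inv_mul_cancel₀ (by positivity : (2 : ℝ) * β ≠ 0), Real.rpow_one]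
          _ ≤ R ^ (2 * β) := hle
      have hden : (0 : ℝ) < (1 + R ^ (2 * β)) ^ 3 := by positivity
      have hP : (0 : ℝ) < R ^ (β + 1) := Real.rpow_pos_of_pos hR0 _
      have hsub : R ^ (1 - β) = R ^ (β + 1) / R ^ (2 * β) := by
        rw [← Real.rpow_sub hR0]; ring_nf
      rw [Real.norm_eq_abs, abs_of_nonneg (Real.rpow_nonneg hR0.le _), hsub,
        phi0_sq_eq α hR0, ← hβdef, ← mul_div_assoc, div_le_div_iff₀ hX hden]
      set X := R ^ (2 * β)
      set P := R ^ (β + 1)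
      have h32 : 32 / β ^ 2 * (β ^ 2 * P * (1 - X) ^ 2) * X = 32 * P * (1 - X) ^ 2 * X := by
        field_simp
      rw [h32]
      have hpoly : (1 + X) ^ 3 ≤ 32 * (1 - X) ^ 2 * X := by
        nlinarith [sq_nonneg (X - 2), mul_nonneg (sub_nonneg.mpr hX2) (sq_nonneg (X - 2))]
      nlinarith [mul_le_mul_of_nonneg_left hpoly hP.le]
    have := (integrableOn_Ioi_rpow_iff hc0).mp key
    linarith
  · intro hβgt
    have hsplit : Set.Ioo (0 : ℝ) 1 ∪ Set.Ici 1 = Set.Ioi 0 :=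
      Set.Ioo_union_Ici_eq_Ioi zero_lt_one
    rw [← hsplit]
    apply IntegrableOn.union
    · -- near zero
      have hg : IntegrableOn (fun R : ℝ => β ^ 2 * R ^ (β + 1)) (Set.Ioo (0 : ℝ) 1) :=
        ((intervalIntegral.integrableOn_Ioo_rpow_iff one_pos).mpr (by linarith)).const_mul _
      apply hg.mono' (phi0_sq_meas α).aestronglyMeasurable
      filter_upwards [ae_restrict_mem measurableSet_Ioo] with R hR
      have hR0 : (0 : ℝ) < R := hR.1
      have hR1 : R < 1 := hR.2
      have hX : (0 : ℝ) < R ^ (2 * β) := Real.rpow_pos_of_pos hR0 _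
      have hX1 : R ^ (2 * β) ≤ 1 := Real.rpow_le_one hR0.le hR1.le (by positivity)
      have hP : (0 : ℝ) < R ^ (β + 1) := Real.rpow_pos_of_pos hR0 _
      have hden : (0 : ℝ) < (1 + R ^ (2 * β)) ^ 3 := by positivity
      rw [Real.norm_eq_abs, abs_of_nonneg (sq_nonneg _), phi0_sq_eq α hR0, ← hβdef,
        div_le_iff₀ hden]
      set X := R ^ (2 * β)
      set P := R ^ (β + 1)
      have hpoly : (1 - X) ^ 2 ≤ (1 + X) ^ 3 := by nlinarith [mul_pos hX hX]
      nlinarith [mul_le_mul_of_nonneg_left hpoly (mul_pos hβ2 hP).le]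
    · -- near infinity
      rw [integrableOn_Ici_iff_integrableOn_Ioi]
      have hg : IntegrableOn (fun R : ℝ => β ^ 2 * R ^ (1 - β)) (Set.Ioi (1 : ℝ)) :=
        ((integrableOn_Ioi_rpow_iff one_pos).mpr (by linarith)).const_mul _
      apply hg.mono' (phi0_sq_meas α).aestronglyMeasurable
      filter_upwards [ae_restrict_mem measurableSet_Ioi] with R hR
      have hR1 : (1 : ℝ) < R := hR
      have hR0 : (0 : ℝ) < R := lt_trans one_pos hR1
      have hX1 : (1 : ℝ) ≤ R ^ (2 * β) := Real.one_le_rpow hR1.le (by positivity)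
      have hX : (0 : ℝ) < R ^ (2 * β) := lt_of_lt_of_le one_pos hX1
      have hP : (0 : ℝ) < R ^ (β + 1) := Real.rpow_pos_of_pos hR0 _
      have hden : (0 : ℝ) < (1 + R ^ (2 * β)) ^ 3 := by positivity
      have hsub : R ^ (1 - β) = R ^ (β + 1) / R ^ (2 * β) := by
        rw [← Real.rpow_sub hR0]; ring_nf
      rw [Real.norm_eq_abs, abs_of_nonneg (sq_nonneg _), phi0_sq_eq α hR0, ← hβdef, hsub,
        ← mul_div_assoc, div_le_div_iff₀ hden hX]
      set X := R ^ (2 * β)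
      set P := R ^ (β + 1)
      have hpoly : (1 - X) ^ 2 * X ≤ (1 + X) ^ 3 := by
        nlinarith [mul_pos hX hX, mul_pos (mul_pos hX hX) hX,
          mul_le_mul_of_nonneg_left hX1 (mul_pos hX hX).le]
      nlinarith [mul_le_mul_of_nonneg_left hpoly (mul_pos hβ2 hP).le]
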